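/- arXiv:2204.01889 — 3 statements merged into one kernel-verified Lean document; each statement's English description precedes it below -/
import Mathlib

section
/- Let n ≥ 3 and define (f_i), (g_i) by (f_0,g_0)=(1,1), f_i = (n-2)f_{i-1} + g_{i-1}, g_i = (n-3)f_{i-1} + g_{i-1}. Then gcd(f_i, f_{i-1}) = 1 and gcd(f_i, g_i) = 1 for all i ≥ 1. -/
theorem fg_coprime (n : ℤ) (hn : 3 ≤ n) (f g : ℕ → ℤ)
    (hf0 : f 0 = 1) (hg0 : g 0 = 1)
    (hf : ∀ i : ℕ, f (i + 1) = (n - 2) * f i + g i)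
    (hg : ∀ i : ℕ, g (i + 1) = (n - 3) * f i + g i) :
    ∀ i : ℕ, Int.gcd (f (i + 1)) (f i) = 1 ∧ Int.gcd (f (i + 1)) (g (i + 1)) = 1 := by
  have key : ∀ i : ℕ, IsCoprime (f i) (g i) := by
    intro i
    induction i with
    | zero => rw [hf0, hg0]; exact isCoprime_one_left
    | succ i ih =>
      have h2 : IsCoprime (g (i + 1)) (f i) := by
        have hG : g (i + 1) = g i + (n - 3) * f i := by rw [hg]; ring
        rw [hG]; exact ih.symm.add_mul_right_left (n - 3)
      have hF : f (i + 1) = f i + g (i + 1) * 1 := by rw [hf, hg]; ring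
      rw [hF]; exact h2.symm.add_mul_left_left 1
  intro i
  have hfi : IsCoprime (f (i + 1)) (f i) := by
    have hF : f (i + 1) = g i + (n - 2) * f i := by rw [hf]; ring
    rw [hF]; exact (key i).symm.add_mul_right_left (n - 2)
  have h2 : IsCoprime (g (i + 1)) (f i) := by
    have hG : g (i + 1) = g i + (n - 3) * f i := by rw [hg]; ring
    rw [hG]; exact (key i).symm.add_mul_right_left (n - 3)
  have hfg : IsCoprime (f (i + 1)) (g (i + 1)) := by
    have hF : f (i + 1) = f i + g (i + 1) * 1 := by rw [hf, hg]; ring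
    rw [hF]; exact h2.symm.add_mul_left_left 1
  exact ⟨Int.isCoprime_iff_gcd_eq_one.mp hfi, Int.isCoprime_iff_gcd_eq_one.mp hfg⟩
end

section
/- Let t, u be real numbers with t < -1 < u < 0 and u - t > 1. The set P_B = {(α,n) ∈ ℤ² : n ≥ α, n ≥ 0, 0 ≤ n ≤ (α-n)t - ⌈(α-n)u⌉} satisfies {(α,n) : n ≥ max(α,0), n ≥ ((u-t)/(u-t-1))α + 1/(u-t-1)} ⊆ P_B ⊆ {(α,n) : n ≥ max(α,0), n ≥ ((u-t)/(u-t-1))α}. -/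
theorem PB_bounds (t u : ℝ) (h1 : t < -1) (h2 : -1 < u) (h3 : u < 0) (h4 : 1 < u - t) :
    {p : ℤ × ℤ | p.1 ≤ p.2 ∧ 0 ≤ p.2 ∧
        ((u - t) / (u - t - 1)) * (p.1 : ℝ) + 1 / (u - t - 1) ≤ (p.2 : ℝ)} ⊆
      {p : ℤ × ℤ | p.1 ≤ p.2 ∧ 0 ≤ p.2 ∧
        (p.2 : ℝ) ≤ ((p.1 : ℝ) - (p.2 : ℝ)) * t - (⌈((p.1 : ℝ) - (p.2 : ℝ)) * u⌉ : ℝ)} ∧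
    {p : ℤ × ℤ | p.1 ≤ p.2 ∧ 0 ≤ p.2 ∧
        (p.2 : ℝ) ≤ ((p.1 : ℝ) - (p.2 : ℝ)) * t - (⌈((p.1 : ℝ) - (p.2 : ℝ)) * u⌉ : ℝ)} ⊆
      {p : ℤ × ℤ | p.1 ≤ p.2 ∧ 0 ≤ p.2 ∧
        ((u - t) / (u - t - 1)) * (p.1 : ℝ) ≤ (p.2 : ℝ)} := by
  have hd : (0:ℝ) < u - t - 1 := by linarith
  constructor
  · rintro ⟨a, n⟩ ⟨h5, h6, h7⟩
    refine ⟨h5, h6, ?_⟩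
    have hm : ((n:ℝ) - a) * (u - t) ≥ n + 1 := by
      rw [div_mul_eq_mul_div, ← add_div, div_le_iff₀ hd] at h7
      nlinarith
    have hc : (⌈((a:ℝ) - n) * u⌉ : ℝ) < ((a:ℝ) - n) * u + 1 := Int.ceil_lt_add_one _
    nlinarith
  · rintro ⟨a, n⟩ ⟨h5, h6, h7⟩
    refine ⟨h5, h6, ?_⟩
    have hc : ((a:ℝ) - n) * u ≤ (⌈((a:ℝ) - n) * u⌉ : ℝ) := Int.le_ceil _
    rw [div_mul_eq_mul_div, div_le_iff₀ hd]
    nlinarith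
end

section
/- Let s, t, u be rational numbers with t < -1 < u < 0 < s and 1/(s-u) + 1/(u-t) < 1. Define P_A = {(α,n) ∈ ℤ² : α ≥ 0, n ≥ 0, ⌈αu⌉ + n ≤ αs} and P_B = {(α,n) ∈ ℤ² : n ≥ α, n ≥ 0, n ≤ (α-n)t - ⌈(α-n)u⌉}. Then the set ℕ₀² \ (P_A ∪ P_B) is finite, where ℕ₀ denotes the non-negative integers. -/
/-!
Put `a = s - u` and `b = u - t`, both positive, and `c = 1/a + 1/b < 1`. Since `⌈y u⌉ < y u + 1`,
a point `(α, n)` missing `P_A` has `α a < n + 1`, which forces `α ≤ n` because `a > 1`; a point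
`(α, n)` with `α ≤ n` missing `P_B` has `(n - α) b < n + 1`. Adding `α < (n + 1)/a` and
`n - α < (n + 1)/b` gives `n < (n + 1) c`, i.e. `n < c / (1 - c)`, so the complement lies in
a bounded box.
-/

section

variable {K : Type*} [Field K] [LinearOrder K] [IsStrictOrderedRing K]

theorem mul_sub_lt_add_one_of_sub_ceil_lt [FloorRing K] {y v u z : K}
    (h : y * v - ⌈y * u⌉ < z) : y * (v - u) < z + 1 := by
  have := Int.ceil_lt_add_one (y * u)
  linarith [mul_sub y v u]

theorem lt_mul_one_div_add_one_div {a b x n m : K} (ha : 0 < a) (hb : 0 < b)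
    (hx : x * a < m) (hnx : (n - x) * b < m) : n < m * (1 / a + 1 / b) := by
  have hx' : x < m / a := (lt_div_iff₀ ha).2 hx
  have hnx' : n - x < m / b := (lt_div_iff₀ hb).2 hnx
  calc n = x + (n - x) := by ring
    _ < m / a + m / b := by linarith
    _ = m * (1 / a + 1 / b) := by ring

theorem lt_div_one_sub_of_lt_add_one_mul {n c : K} (hc : c < 1) (h : n < (n + 1) * c) :
    n < c / (1 - c) := by
  rw [lt_div_iff₀ (sub_pos.2 hc)]
  linarith

theorem Int.le_of_mul_lt_add_one {a : K} {α n : ℤ} (hα : 0 ≤ α) (ha : 1 ≤ a)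
    (h : α * a < n + 1) : α ≤ n := by
  have hαa : (α : K) ≤ α * a := le_mul_of_one_le_right (by exact_mod_cast hα) ha
  exact Int.lt_add_one_iff.1 (by exact_mod_cast hαa.trans_lt h)

theorem le_and_le_ceil_of_mul_lt_add_one [FloorRing K] {a b : K} {α n : ℤ}
    (ha : 0 < a) (hb : 0 < b) (hab : 1 / a + 1 / b < 1) (hα : 0 ≤ α)
    (hαa : α * a < n + 1) (hnb : α ≤ n → (n - α) * b < n + 1) :
    α ≤ n ∧ n ≤ ⌈(1 / a + 1 / b) / (1 - (1 / a + 1 / b))⌉ := by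
  have ha1 : 1 < a := by
    have : 1 / a < 1 := by linarith [one_div_pos.2 hb]
    simpa using one_lt_one_div (one_div_pos.2 ha) this
  have hαn : α ≤ n := Int.le_of_mul_lt_add_one hα ha1.le hαa
  have hn := lt_mul_one_div_add_one_div ha hb hαa (hnb hαn)
  refine ⟨hαn, (Int.cast_le (R := K)).1 ?_⟩
  exact (lt_div_one_sub_of_lt_add_one_mul hab hn).le.trans (Int.le_ceil _)

end

theorem complement_finite (s t u : ℚ)
    (h1 : t < -1) (h2 : -1 < u) (h3 : u < 0) (h4 : 0 < s)
    (h5 : 1 / (s - u) + 1 / (u - t) < 1) :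
    Set.Finite {p : ℤ × ℤ | 0 ≤ p.1 ∧ 0 ≤ p.2 ∧
      p ∉ ({q : ℤ × ℤ | 0 ≤ q.1 ∧ 0 ≤ q.2 ∧
              ((⌈(q.1 : ℚ) * u⌉ : ℚ) + (q.2 : ℚ)) ≤ (q.1 : ℚ) * s} ∪
            {q : ℤ × ℤ | q.1 ≤ q.2 ∧ 0 ≤ q.2 ∧
              (q.2 : ℚ) ≤ ((q.1 : ℚ) - (q.2 : ℚ)) * t - (⌈((q.1 : ℚ) - (q.2 : ℚ)) * u⌉ : ℚ)})} := by
  let c := 1 / (s - u) + 1 / (u - t)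
  refine (Set.finite_Icc ((0 : ℤ), (0 : ℤ)) (⌈c / (1 - c)⌉, ⌈c / (1 - c)⌉)).subset ?_
  rintro ⟨α, n⟩ ⟨hα, hn, hnot⟩
  simp only [Set.mem_union, Set.mem_ofPred_eq, not_or, not_and, not_le] at hnot
  have hαa : (α : ℚ) * (s - u) < n + 1 :=
    mul_sub_lt_add_one_of_sub_ceil_lt (by linarith [hnot.1 hα hn])
  have hnb (hαn : α ≤ n) : (n - α) * (u - t) < n + 1 := by
    have hB : ((α : ℚ) - n) * t - ⌈((α : ℚ) - n) * u⌉ < n := hnot.2 hαn hn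
    linarith [mul_sub_lt_add_one_of_sub_ceil_lt hB]
  obtain ⟨hαn, hnN⟩ :=
    le_and_le_ceil_of_mul_lt_add_one (by linarith) (by linarith) h5 hα hαa hnb
  exact ⟨⟨hα, hn⟩, hαn.trans hnN, hnN⟩
end
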